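/- Let B_j^{(n)}(x) denote the Norlund polynomials defined by e^{xz} z^n/(e^z-1)^n = \sum_{j \geq 0} B_j^{(n)}(x) z^j/j!. Then for integers p \geq 1 and 0 \leq r \leq p-1, B_r^{(p+1)}(p)/r! = \sum_{k=1}^{r+1} (1/k) B_{r+1-k}^{(p+1-k)}(p-k)/(r+1-k)!. -/

import Mathlib

/-! With `u = 1 - e^{-z}` one has `z = -log (1 - u) = ∑_{k ≥ 1} u^k/k`, and
`u^k = z^k (e^{-z} (e^z - 1)/z)^k`. Hence multiplying `F = e^{pz} (z/(e^z - 1))^{p+1}` by `u^k`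
gives `z^k e^{(p-k)z} (z/(e^z - 1))^{p+1-k}`, and the recurrence is the comparison of the
coefficients of `z^{r+1}` in `F z ≡ F ∑_{k ≤ r+1} u^k/k  (mod z^{r+2})`. The truncated logarithm
is matched with `z` through its derivative, `u' (1 + u + ⋯ + u^r) = 1 - u^{r+1}`. -/

open PowerSeries

/-- The power series `(e^z - 1)/z = ∑_k z^k/(k+1)!`. -/
noncomputable def egfShiftOne : PowerSeries ℚ :=
  PowerSeries.mk fun k => 1 / (Nat.factorial (k + 1) : ℚ)

/-- The power series `e^{x z} = ∑_k x^k z^k/k!`. -/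
noncomputable def expPS (x : ℚ) : PowerSeries ℚ :=
  PowerSeries.mk fun k => x ^ k / (Nat.factorial k : ℚ)

/-- The Nörlund polynomials `B_j^{(n)}(x)`, defined by
`e^{xz} (z/(e^z-1))^n = ∑_j B_j^{(n)}(x) z^j/j!`. -/
noncomputable def norlund (n : ℕ) (x : ℚ) (j : ℕ) : ℚ :=
  (Nat.factorial j : ℚ) * PowerSeries.coeff j (expPS x * (egfShiftOne⁻¹) ^ n)

namespace PowerSeries

theorem X_pow_succ_dvd_of_X_pow_dvd_derivative {R : Type*} [CommRing R] [IsAddTorsionFree R]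
    {f : R⟦X⟧} {n : ℕ} (h0 : constantCoeff f = 0) (hd : X ^ n ∣ d⁄dX R f) :
    X ^ (n + 1) ∣ f := by
  rw [X_pow_dvd_iff] at hd ⊢
  rintro (_ | m) hm
  · rwa [coeff_zero_eq_constantCoeff_apply]
  · have h := hd m (by omega)
    rwa [coeff_derivative, ← Nat.cast_succ, ← nsmul_eq_mul',
      nsmul_eq_zero_iff_right m.succ_ne_zero] at h

theorem coeff_mul_eq_of_X_pow_dvd_sub {R : Type*} [CommRing R] {a b : R⟦X⟧} {N : ℕ}
    (h : X ^ (N + 1) ∣ a - b) (f : R⟦X⟧) : coeff N (f * a) = coeff N (f * b) := by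
  rw [← sub_eq_zero, ← map_sub, ← mul_sub]
  exact X_pow_dvd_iff.mp (dvd_mul_of_dvd_right h f) N N.lt_succ_self

variable {K : Type*} [Field K] [CharZero K]

theorem derivative_sum_pow_div (u : K⟦X⟧) (N : ℕ) :
    d⁄dX K (∑ k ∈ Finset.Icc 1 N, C (k : K)⁻¹ * u ^ k) =
      d⁄dX K u * ∑ k ∈ Finset.range N, u ^ k := by
  rw [map_sum, Finset.mul_sum, ← Finset.Ico_add_one_right_eq_Icc, Finset.sum_Ico_eq_sum_range]
  refine Finset.sum_congr rfl fun k _ => ?_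
  have hk : ((k + 1 : ℕ) : K) ≠ 0 := Nat.cast_ne_zero.mpr k.succ_ne_zero
  rw [add_comm 1 k, Derivation.leibniz, derivative_C, smul_zero, add_zero, derivative_pow,
    smul_eq_mul, ← mul_assoc, ← mul_assoc, ← map_natCast C, ← map_mul, inv_mul_cancel₀ hk,
    map_one, one_mul, Nat.add_sub_cancel, mul_comm]

theorem X_pow_succ_dvd_sum_pow_div_sub_X {u : K⟦X⟧} (hu0 : constantCoeff u = 0)
    (hu : d⁄dX K u = 1 - u) (N : ℕ) :
    X ^ (N + 1) ∣ ∑ k ∈ Finset.Icc 1 N, C (k : K)⁻¹ * u ^ k - X := by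
  refine X_pow_succ_dvd_of_X_pow_dvd_derivative ?_ ?_
  · rw [map_sub, map_sum, constantCoeff_X, sub_zero]
    refine Finset.sum_eq_zero fun k hk => ?_
    rw [map_mul, map_pow, hu0, zero_pow (Nat.one_le_iff_ne_zero.mp (Finset.mem_Icc.mp hk).1),
      mul_zero]
  · rw [map_sub, derivative_sum_pow_div, derivative_X, hu, mul_comm, geom_sum_mul_neg,
      sub_sub_cancel_left, dvd_neg]
    exact pow_dvd_pow_of_dvd (X_dvd_iff.mpr hu0) N

end PowerSeries

lemma expPS_eq_rescale (x : ℚ) : expPS x = rescale x (exp ℚ) := by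
  ext n
  simp [expPS, coeff_rescale, coeff_exp, div_eq_mul_inv]

lemma expPS_add (a b : ℚ) : expPS (a + b) = expPS a * expPS b := by
  rw [expPS_eq_rescale, expPS_eq_rescale, expPS_eq_rescale, exp_mul_exp_eq_exp_add]

lemma expPS_zero : expPS 0 = 1 := by
  rw [expPS_eq_rescale, rescale_zero_apply, constantCoeff_exp, map_one]

lemma expPS_sub_natCast (x : ℚ) (k : ℕ) : expPS (x - k) = expPS x * expPS (-1) ^ k := by
  induction k with
  | zero => rw [Nat.cast_zero, sub_zero, pow_zero, mul_one]
  | succ k ih => rw [pow_succ, ← mul_assoc, ← ih, ← expPS_add, Nat.cast_succ, sub_add_eq_sub_sub,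
      sub_eq_add_neg]

lemma derivative_expPS (a : ℚ) : d⁄dX ℚ (expPS a) = C a * expPS a := by
  ext n
  have hn : ((n : ℚ) + 1) ≠ 0 := by positivity
  have hfac : (n.factorial : ℚ) ≠ 0 := by positivity
  simp only [coeff_derivative, expPS, coeff_mk, coeff_C_mul, Nat.factorial_succ, pow_succ]
  push_cast
  field_simp

lemma X_mul_egfShiftOne : (X : ℚ⟦X⟧) * egfShiftOne = expPS 1 - 1 := by
  ext (_ | n)
  · simp [expPS]
  · simp [coeff_succ_X_mul, egfShiftOne, expPS, coeff_one]

lemma X_mul_expPS_neg_one_mul_egfShiftOne :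
    X * (expPS (-1) * egfShiftOne) = 1 - expPS (-1) := by
  rw [mul_left_comm, X_mul_egfShiftOne, mul_sub, mul_one, ← expPS_add, neg_add_cancel, expPS_zero]

lemma egfShiftOne_mul_inv : egfShiftOne * egfShiftOne⁻¹ = 1 :=
  PowerSeries.mul_inv_cancel _ (by simp [egfShiftOne])

lemma coeff_eq_norlund_div_factorial (n : ℕ) (x : ℚ) (j : ℕ) :
    coeff j (expPS x * egfShiftOne⁻¹ ^ n) = norlund n x j / j.factorial := by
  rw [norlund, mul_div_cancel_left₀ _ (by positivity)]

lemma constantCoeff_one_sub_expPS_neg_one : constantCoeff (1 - expPS (-1)) = 0 := by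
  rw [← X_mul_expPS_neg_one_mul_egfShiftOne, map_mul, constantCoeff_X, zero_mul]

lemma derivative_one_sub_expPS_neg_one :
    d⁄dX ℚ (1 - expPS (-1)) = 1 - (1 - expPS (-1)) := by
  rw [map_sub, derivative_one, derivative_expPS, map_neg, map_one, sub_sub_cancel, zero_sub,
    neg_one_mul, neg_neg]

lemma norlund_sub_div_factorial {n k j : ℕ} (hkn : k ≤ n) (hkj : k ≤ j) (x : ℚ) :
    norlund (n - k) (x - k) (j - k) / (j - k).factorial =
      coeff j (expPS x * egfShiftOne⁻¹ ^ n * (1 - expPS (-1)) ^ k) := by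
  obtain ⟨i, rfl⟩ := Nat.exists_eq_add_of_le' hkj
  have hinv : egfShiftOne⁻¹ ^ k * egfShiftOne ^ k = 1 := by
    rw [← mul_pow, mul_comm, egfShiftOne_mul_inv, one_pow]
  rw [← X_mul_expPS_neg_one_mul_egfShiftOne, mul_pow, mul_left_comm, coeff_X_pow_mul,
    Nat.add_sub_cancel, ← coeff_eq_norlund_div_factorial, expPS_sub_natCast,
    ← pow_sub_mul_pow egfShiftOne⁻¹ hkn, mul_pow]
  congr 1
  linear_combination (-(expPS x * expPS (-1) ^ k * egfShiftOne⁻¹ ^ (n - k))) * hinv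

theorem norlund_recurrence_general (p : ℕ) (r : ℕ) (hr : r ≤ p - 1) :
    norlund (p + 1) (p : ℚ) r / (Nat.factorial r : ℚ) =
      ∑ k ∈ Finset.Icc 1 (r + 1),
        (1 / (k : ℚ)) * norlund (p + 1 - k) ((p : ℚ) - k) (r + 1 - k) /
          (Nat.factorial (r + 1 - k) : ℚ) := by
  set F := expPS p * egfShiftOne⁻¹ ^ (p + 1)
  set u := 1 - expPS (-1)
  have hlog := X_pow_succ_dvd_sum_pow_div_sub_X constantCoeff_one_sub_expPS_neg_one
    derivative_one_sub_expPS_neg_one (r + 1)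
  calc norlund (p + 1) (p : ℚ) r / (Nat.factorial r : ℚ)
      = coeff (r + 1) (F * X) := by
        rw [mul_comm F X, coeff_succ_X_mul, coeff_eq_norlund_div_factorial]
    _ = coeff (r + 1) (F * ∑ k ∈ Finset.Icc 1 (r + 1), C (k : ℚ)⁻¹ * u ^ k) :=
        (coeff_mul_eq_of_X_pow_dvd_sub hlog F).symm
    _ = ∑ k ∈ Finset.Icc 1 (r + 1), (k : ℚ)⁻¹ * coeff (r + 1) (F * u ^ k) := by
        simp only [Finset.mul_sum, map_sum, mul_left_comm F, coeff_C_mul]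
    _ = _ := Finset.sum_congr rfl fun k hk => by
        obtain ⟨-, hkr⟩ := Finset.mem_Icc.mp hk
        rw [mul_div_assoc, one_div, norlund_sub_div_factorial (by omega) hkr]

/-- `B_r^{(p+1)}(p)/r! = ∑_{k=1}^{r+1} (1/k) B_{r+1-k}^{(p+1-k)}(p-k)/(r+1-k)!`. -/
theorem norlund_recurrence (p : ℕ) (hp : 1 ≤ p) (r : ℕ) (hr : r ≤ p - 1) :
    norlund (p + 1) (p : ℚ) r / (Nat.factorial r : ℚ) =
      ∑ k ∈ Finset.Icc 1 (r + 1),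
        (1 / (k : ℚ)) * norlund (p + 1 - k) ((p : ℚ) - k) (r + 1 - k) /
          (Nat.factorial (r + 1 - k) : ℚ) :=
  norlund_recurrence_general p r hr
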